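/- arXiv:1901.10382 — 6 statements merged into one kernel-verified Lean document; each statement's English description precedes it below -/
import Mathlib

section
/- For the EKI flow du^(j)/dt = -(1/J)∑_{k=1}^J D_{jk}(𝔲)(u^(k) - ū) with linear observation operator G(u) = A u, each ensemble member satisfies the preconditioned gradient flow du^(j)/dt = -C(𝔲) ∇_u ℓ_Y(A u^(j), y), where ℓ_Y(y', y) = (1/2)‖Γ^{-1/2}(y' - y)‖²_Y and C(𝔲) is the empirical covariance of the ensemble. That is, the two right-hand sides coincide as vectors in X. -/
open scoped BigOperators RealInnerProductSpace

theorem inner_symmetric_map_eq_inner_adjoint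
    {X Y : Type*} [NormedAddCommGroup X] [InnerProductSpace ℝ X] [FiniteDimensional ℝ X]
    [NormedAddCommGroup Y] [InnerProductSpace ℝ Y] [FiniteDimensional ℝ Y]
    (A : X →ₗ[ℝ] Y) {S : Y →ₗ[ℝ] Y} (hS : S.IsSymmetric) (a : Y) (v : X) :
    ⟪S a, S (A v)⟫ = ⟪LinearMap.adjoint A (S (S a)), v⟫ := by
  rw [LinearMap.adjoint_inner_left, ← hS]

theorem eki_flow_is_preconditioned_gradient_flow_general
    {X Y : Type*} [NormedAddCommGroup X] [InnerProductSpace ℝ X] [FiniteDimensional ℝ X]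
    [NormedAddCommGroup Y] [InnerProductSpace ℝ Y] [FiniteDimensional ℝ Y]
    (J : ℕ) (u : Fin J → X)
    (ubar : X) (hubar : ubar = (J : ℝ)⁻¹ • ∑ j, u j)
    (A : X →ₗ[ℝ] Y) (y : Y)
    -- `S` plays the role of `Γ^{-1/2}`: a symmetric operator, so that `Γ⁻¹ = S ∘ S`
    (S : Y →ₗ[ℝ] Y) (hS : ∀ a b, ⟪S a, b⟫ = ⟪a, S b⟫)
    (Gbar : Y) (hGbar : Gbar = (J : ℝ)⁻¹ • ∑ m, A (u m))
    (D : Fin J → Fin J → ℝ)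
    (hD : ∀ j k, D j k = ⟪S (A (u j) - y), S (A (u k) - Gbar)⟫)
    (C : X → X)
    (hC : ∀ v, C v = (J : ℝ)⁻¹ • ∑ m, ⟪v, u m - ubar⟫ • (u m - ubar)) :
    ∀ j, -((J : ℝ)⁻¹ • ∑ k, D j k • (u k - ubar))
        = -(C (LinearMap.adjoint A (S (S (A (u j) - y))))) := by
  intro j
  have hA_mean : A ubar = Gbar := by
    rw [hubar, hGbar, map_smul, map_sum]
  have hD_adjoint : ∀ k, D j k = ⟪LinearMap.adjoint A (S (S (A (u j) - y))), u k - ubar⟫ := by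
    intro k
    rw [hD, ← inner_symmetric_map_eq_inner_adjoint A hS, map_sub A, hA_mean]
  simp only [hC, hD_adjoint]

/-- For linear observation operator `G = A`, the EKI flow right-hand side coincides with
the gradient flow for the least-squares loss preconditioned by the empirical covariance. -/
theorem eki_flow_is_preconditioned_gradient_flow
    {X Y : Type*} [NormedAddCommGroup X] [InnerProductSpace ℝ X] [FiniteDimensional ℝ X]
    [NormedAddCommGroup Y] [InnerProductSpace ℝ Y] [FiniteDimensional ℝ Y]
    (J : ℕ) (hJ : 0 < J) (u : Fin J → X)
    (ubar : X) (hubar : ubar = (J : ℝ)⁻¹ • ∑ j, u j)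
    (A : X →ₗ[ℝ] Y) (y : Y)
    -- `S` plays the role of `Γ^{-1/2}`: a symmetric operator, so that `Γ⁻¹ = S ∘ S`
    (S : Y →ₗ[ℝ] Y) (hS : ∀ a b, ⟪S a, b⟫ = ⟪a, S b⟫)
    (Gbar : Y) (hGbar : Gbar = (J : ℝ)⁻¹ • ∑ m, A (u m))
    (D : Fin J → Fin J → ℝ)
    (hD : ∀ j k, D j k = ⟪S (A (u j) - y), S (A (u k) - Gbar)⟫)
    (C : X → X)
    (hC : ∀ v, C v = (J : ℝ)⁻¹ • ∑ m, ⟪v, u m - ubar⟫ • (u m - ubar)) :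
    ∀ j, -((J : ℝ)⁻¹ • ∑ k, D j k • (u k - ubar))
        = -(C (LinearMap.adjoint A (S (S (A (u j) - y))))) :=
  eki_flow_is_preconditioned_gradient_flow_general J u ubar hubar A y S hS Gbar hGbar D hD C hC
end

section
/- For the TEKI flow du^(j)/dt = -(1/J)∑_{k=1}^J [D_{jk}(𝔲) + ⟨C_0^{-1} u^(j), u^(k) - ū⟩_X](u^(k) - ū) with linear G(u) = Au, each ensemble member satisfies du^(j)/dt = -C(𝔲) ∇_u 𝓘(u^(j); y), where 𝓘(u; y) = (1/2)‖Γ^{-1/2}(Au - y)‖²_Y + (1/2)‖C_0^{-1/2} u‖²_X and C(𝔲) is the empirical covariance. -/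
open scoped RealInnerProductSpace InnerProductSpace

/-!
For linear `G = A` the TEKI weight `D_{jk} + ⟪C₀⁻¹ u⁽ʲ⁾, u⁽ᵏ⁾ - ū⟫` is exactly
`⟪∇𝓘(u⁽ʲ⁾), u⁽ᵏ⁾ - ū⟫`: moving `Γ^{-1/2}` and `A` to the left slot of the misfit term uses
the symmetry of `Γ^{-1/2}`, the adjoint of `A`, and `A ū = Ḡ`. Summing these weights against
the deviations `u⁽ᵏ⁾ - ū` is then, by definition, the empirical covariance applied to `∇𝓘(u⁽ʲ⁾)`.
-/

section

variable {𝕜 X Y : Type*} [RCLike 𝕜]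
  [NormedAddCommGroup X] [InnerProductSpace 𝕜 X] [FiniteDimensional 𝕜 X]
  [NormedAddCommGroup Y] [InnerProductSpace 𝕜 Y] [FiniteDimensional 𝕜 Y]

theorem LinearMap.inner_adjoint_sq_left (A : X →ₗ[𝕜] Y) {S : Y →ₗ[𝕜] Y} (hS : S.IsSymmetric)
    (v : Y) (w : X) : ⟪A.adjoint (S (S v)), w⟫_𝕜 = ⟪S v, S (A w)⟫_𝕜 := by
  rw [LinearMap.adjoint_inner_left, hS]

/-- `∇𝓘(u) = A* Γ⁻¹ (A u - y) + C₀⁻¹ u`, with `S = Γ^{-1/2}` and `T = C₀⁻¹`. -/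
noncomputable def tikhonovGradient (A : X →ₗ[𝕜] Y) (S : Y →ₗ[𝕜] Y) (T : X →ₗ[𝕜] X) (y : Y)
    (u : X) : X :=
  A.adjoint (S (S (A u - y))) + T u

theorem inner_tikhonovGradient_sub (A : X →ₗ[𝕜] Y) {S : Y →ₗ[𝕜] Y} (hS : S.IsSymmetric)
    (T : X →ₗ[𝕜] X) (y : Y) (u v w : X) :
    ⟪tikhonovGradient A S T y u, v - w⟫_𝕜 = ⟪S (A u - y), S (A v - A w)⟫_𝕜 + ⟪T u, v - w⟫_𝕜 := by
  rw [tikhonovGradient, inner_add_left, A.inner_adjoint_sq_left hS, map_sub A v w]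

end

theorem teki_flow_is_preconditioned_gradient_flow_general
    {X Y : Type*} [NormedAddCommGroup X] [InnerProductSpace ℝ X] [FiniteDimensional ℝ X]
    [NormedAddCommGroup Y] [InnerProductSpace ℝ Y] [FiniteDimensional ℝ Y]
    (J : ℕ) (u : Fin J → X)
    (ubar : X) (hubar : ubar = (J : ℝ)⁻¹ • ∑ j, u j)
    (A : X →ₗ[ℝ] Y) (y : Y)
    -- `S` plays the role of `Γ^{-1/2}` (so `Γ⁻¹ = S ∘ S`)
    (S : Y →ₗ[ℝ] Y) (hS : ∀ a b, ⟪S a, b⟫ = ⟪a, S b⟫)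
    -- `T` plays the role of `C₀⁻¹`
    (T : X →ₗ[ℝ] X)
    (Gbar : Y) (hGbar : Gbar = (J : ℝ)⁻¹ • ∑ m, A (u m))
    (D : Fin J → Fin J → ℝ)
    (hD : ∀ j k, D j k = ⟪S (A (u j) - y), S (A (u k) - Gbar)⟫)
    (E : Fin J → Fin J → ℝ)
    (hE : ∀ j k, E j k = D j k + ⟪T (u j), u k - ubar⟫)
    (C : X → X)
    (hC : ∀ v, C v = (J : ℝ)⁻¹ • ∑ m, ⟪v, u m - ubar⟫ • (u m - ubar)) :
    ∀ j, -((J : ℝ)⁻¹ • ∑ k, E j k • (u k - ubar))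
        = -(C (LinearMap.adjoint A (S (S (A (u j) - y))) + T (u j))) := by
  intro j
  have hA_mean : A ubar = Gbar := by rw [hubar, hGbar, map_smul, map_sum]
  have hweight : ∀ k, E j k = ⟪tikhonovGradient A S T y (u j), u k - ubar⟫ := fun k => by
    rw [hE, hD, inner_tikhonovGradient_sub A hS, hA_mean]
  simp_rw [hC, hweight]
  rfl

/-- For linear observation operator `G = A`, the TEKI flow right-hand side coincides with
the gradient flow for the Tikhonov-regularized least-squares loss
`𝓘(u) = ½‖Γ^{-1/2}(Au - y)‖² + ½‖C₀^{-1/2}u‖²`, preconditioned by the empirical covariance. -/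
theorem teki_flow_is_preconditioned_gradient_flow
    {X Y : Type*} [NormedAddCommGroup X] [InnerProductSpace ℝ X] [FiniteDimensional ℝ X]
    [NormedAddCommGroup Y] [InnerProductSpace ℝ Y] [FiniteDimensional ℝ Y]
    (J : ℕ) (hJ : 0 < J) (u : Fin J → X)
    (ubar : X) (hubar : ubar = (J : ℝ)⁻¹ • ∑ j, u j)
    (A : X →ₗ[ℝ] Y) (y : Y)
    -- `S` plays the role of `Γ^{-1/2}` (so `Γ⁻¹ = S ∘ S`)
    (S : Y →ₗ[ℝ] Y) (hS : ∀ a b, ⟪S a, b⟫ = ⟪a, S b⟫)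
    -- `T` plays the role of `C₀⁻¹`
    (T : X →ₗ[ℝ] X) (hT : ∀ a b, ⟪T a, b⟫ = ⟪a, T b⟫)
    (Gbar : Y) (hGbar : Gbar = (J : ℝ)⁻¹ • ∑ m, A (u m))
    (D : Fin J → Fin J → ℝ)
    (hD : ∀ j k, D j k = ⟪S (A (u j) - y), S (A (u k) - Gbar)⟫)
    (E : Fin J → Fin J → ℝ)
    (hE : ∀ j k, E j k = D j k + ⟪T (u j), u k - ubar⟫)
    (C : X → X)
    (hC : ∀ v, C v = (J : ℝ)⁻¹ • ∑ m, ⟪v, u m - ubar⟫ • (u m - ubar)) :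
    ∀ j, -((J : ℝ)⁻¹ • ∑ k, E j k • (u k - ubar))
        = -(C (LinearMap.adjoint A (S (S (A (u j) - y))) + T (u j))) :=
  teki_flow_is_preconditioned_gradient_flow_general J u ubar hubar A y S hS T Gbar hGbar D hD E hE C
    hC
end

section
/- Along the TEKI flow, the empirical covariance C(t) = C(𝔲(t)) satisfies, for every fixed vector v ∈ X, d/dt ⟨v, C(t) v⟩ = -2‖C_0^{-1/2} C(t) v‖²_X - 2J^{-2}‖Γ^{-1/2} ∑_{j=1}^J ⟨v, u^(j)-ū⟩ (G(u^(j)) - Ḡ)‖²_Y ≤ 0, using that C(t) v = (1/J)∑_j ⟨v, u^(j)-ū⟩ (u^(j) - ū). In particular, t ↦ ⟨v, C(t)v⟩ is nonincreasing. -/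
open scoped BigOperators RealInnerProductSpace

/-!
Write `aⱼ = ⟪v, uⱼ - ū⟫`, so that `⟪v, C v⟫ = J⁻¹ ∑ⱼ aⱼ²` and `∑ⱼ aⱼ = 0`. The vanishing of
`∑ⱼ aⱼ` removes the drift of the mean `ū` from the derivative, and lets one replace `y` by `Ḡ` and
`uⱼ` by `uⱼ - ū` inside `∑ⱼ aⱼ • _`. The derivative thus becomes `-2 J⁻²` times the quadratic form
`∑ⱼₖ aⱼ Eⱼₖ aₖ` of the TEKI kernel, which splits as
`‖Γ^{-1/2} ∑ⱼ aⱼ (G(uⱼ) - Ḡ)‖² + ‖C₀^{-1/2} ∑ⱼ aⱼ (uⱼ - ū)‖²`, and `∑ⱼ aⱼ (uⱼ - ū) = J C v`.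
-/

open Finset

theorem sum_sub_card_inv_smul_sum {ι 𝕜 V : Type*} [Fintype ι] [Nonempty ι] [DivisionRing 𝕜]
    [CharZero 𝕜] [AddCommGroup V] [Module 𝕜 V] (x : ι → V) :
    ∑ i, (x i - (Fintype.card ι : 𝕜)⁻¹ • ∑ j, x j) = 0 := by
  rw [sum_sub_distrib, sum_const, card_univ, ← Nat.cast_smul_eq_nsmul 𝕜, smul_smul,
    mul_inv_cancel₀ (Nat.cast_ne_zero.2 Fintype.card_ne_zero), one_smul, sub_self]

theorem sum_smul_sub_const_of_sum_eq_zero {ι R V : Type*} [Fintype ι] [Ring R] [AddCommGroup V]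
    [Module R V] {a : ι → R} (ha : ∑ i, a i = 0) (x : ι → V) (c : V) :
    ∑ i, a i • (x i - c) = ∑ i, a i • x i := by
  simp only [smul_sub, sum_sub_distrib, ← sum_smul, ha, zero_smul, sub_zero]

section InnerProduct

variable {ι E : Type*} [Fintype ι] [NormedAddCommGroup E] [InnerProductSpace ℝ E]

theorem sum_mul_sum_inner_mul (a b : ι → ℝ) (f g : ι → E) :
    ∑ j, a j * ∑ k, ⟪f j, g k⟫ * b k = ⟪∑ j, a j • f j, ∑ k, b k • g k⟫ := by
  rw [sum_inner]
  refine sum_congr rfl fun j _ => ?_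
  simp only [real_inner_smul_left, inner_sum, real_inner_smul_right, mul_sum]
  exact sum_congr rfl fun k _ => by ring

theorem hasDerivWithinAt_inner_sum_inner_smul {e : ℝ → ι → E} {e' : ι → E} {D : Set ℝ} {t : ℝ}
    (he : ∀ j, HasDerivWithinAt (fun s => e s j) (e' j) D t) (v : E) :
    HasDerivWithinAt (fun s => ⟪v, ∑ j, ⟪v, e s j⟫ • e s j⟫)
      (2 * ⟪v, ∑ j, ⟪v, e t j⟫ • e' j⟫) D t := by
  have hcoord : ∀ j, HasDerivWithinAt (fun s => ⟪v, e s j⟫) ⟪v, e' j⟫ D t := fun j => by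
    simpa using (hasDerivWithinAt_const t D v).inner ℝ (he j)
  simp only [inner_sum, real_inner_smul_right, mul_sum]
  refine (HasDerivWithinAt.fun_sum fun j (_ : j ∈ univ) =>
    (hcoord j).mul (hcoord j)).congr_deriv ?_
  exact sum_congr rfl fun j _ => by ring

end InnerProduct

section Teki

variable {ι X Y : Type*} [Fintype ι] [NormedAddCommGroup X] [InnerProductSpace ℝ X]
  [NormedAddCommGroup Y] [InnerProductSpace ℝ Y]

theorem sum_mul_sum_teki_kernel_mul {a : ι → ℝ} (ha : ∑ j, a j = 0) (x : ι → X) (xbar : X)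
    (g : ι → Y) (gbar y : Y) (S : Y →ₗ[ℝ] Y) {R : X →ₗ[ℝ] X} (hR : R.IsSymmetric) :
    ∑ j, a j * ∑ k, (⟪S (g j - y), S (g k - gbar)⟫ + ⟪R (R (x j)), x k - xbar⟫) * a k
      = ‖S (∑ j, a j • (g j - gbar))‖ ^ 2 + ‖R (∑ j, a j • (x j - xbar))‖ ^ 2 := by
  simp only [add_mul, sum_add_distrib, mul_add, sum_mul_sum_inner_mul, ← map_sum, ← map_smul,
    sum_smul_sub_const_of_sum_eq_zero ha, real_inner_self_eq_norm_sq]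
  rw [hR, real_inner_self_eq_norm_sq]

theorem hasDerivWithinAt_inner_teki_covariance {J : ℕ} (hJ : 0 < J) {u : ℝ → Fin J → X}
    {G : X → Y} {y : Y} {S : Y →ₗ[ℝ] Y} {R : X →ₗ[ℝ] X} (hR : R.IsSymmetric) {ubar : ℝ → X}
    (hubar : ∀ t, ubar t = (J : ℝ)⁻¹ • ∑ j, u t j) {C : ℝ → X → X}
    (hC : ∀ t v, C t v = (J : ℝ)⁻¹ • ∑ j, ⟪v, u t j - ubar t⟫ • (u t j - ubar t))
    {t : ℝ} {Gbar : Y} {E : Fin J → Fin J → ℝ}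
    (hE : ∀ j k, E j k = ⟪S (G (u t j) - y), S (G (u t k) - Gbar)⟫
      + ⟪R (R (u t j)), u t k - ubar t⟫) {D : Set ℝ}
    (hflow : ∀ j, HasDerivWithinAt (fun s => u s j)
      (-((J : ℝ)⁻¹ • ∑ k, E j k • (u t k - ubar t))) D t) (v : X) :
    HasDerivWithinAt (fun s => ⟪v, C s v⟫)
      (-2 * ‖R (C t v)‖ ^ 2
        - 2 * ((J : ℝ)⁻¹) ^ 2 * ‖S (∑ j, ⟪v, u t j - ubar t⟫ • (G (u t j) - Gbar))‖ ^ 2) D t := by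
  have : Nonempty (Fin J) := Fin.pos_iff_nonempty.mp hJ
  set d := fun j => -((J : ℝ)⁻¹ • ∑ k, E j k • (u t k - ubar t))
  set a := fun j => ⟪v, u t j - ubar t⟫ with ha_def
  have ha : ∑ j, a j = 0 := by
    have := sum_sub_card_inv_smul_sum (𝕜 := ℝ) (u t)
    rw [Fintype.card_fin, ← hubar] at this
    rw [← inner_sum, this, inner_zero_right]
  have hubar_deriv : HasDerivWithinAt ubar ((J : ℝ)⁻¹ • ∑ j, d j) D t := by
    rw [funext hubar]
    exact (HasDerivWithinAt.fun_sum fun j _ => hflow j).const_smul _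
  have hcentered : ∀ j, HasDerivWithinAt (fun s => u s j - ubar s)
      (d j - (J : ℝ)⁻¹ • ∑ k, d k) D t := fun j => (hflow j).sub hubar_deriv
  have hquad : (fun s => ⟪v, C s v⟫)
      = fun s => (J : ℝ)⁻¹ * ⟪v, ∑ j, ⟪v, u s j - ubar s⟫ • (u s j - ubar s)⟫ :=
    funext fun s => by rw [hC, real_inner_smul_right]
  rw [hquad]
  refine ((hasDerivWithinAt_inner_sum_inner_smul hcentered v).const_mul _).congr_deriv ?_
  have hdrift : ⟪v, ∑ j, a j • d j⟫ = -(J : ℝ)⁻¹ * ∑ j, a j * ∑ k, E j k * a k := by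
    simp only [d, inner_sum, real_inner_smul_right, inner_neg_right, mul_sum, ← sum_neg_distrib]
    exact sum_congr rfl fun j _ => sum_congr rfl fun k _ => by ring
  have hmean : ∑ j, a j • (u t j - ubar t) = (J : ℝ) • C t v := by
    rw [hC, smul_smul, mul_inv_cancel₀ (by positivity), one_smul]
  rw [sum_smul_sub_const_of_sum_eq_zero (a := a) ha, hdrift]
  simp only [hE]
  rw [sum_mul_sum_teki_kernel_mul ha _ _ _ _ _ _ hR, hmean, map_smul, norm_smul,
    Real.norm_natCast, ha_def]
  field_simp
  ring

end Teki

theorem teki_covariance_quadratic_form_decreasing_general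
    {X Y : Type*} [NormedAddCommGroup X] [InnerProductSpace ℝ X]
    [NormedAddCommGroup Y] [InnerProductSpace ℝ Y]
    (J : ℕ) (hJ : 0 < J) (Tend : ℝ)
    (u : ℝ → Fin J → X)
    (G : X → Y) (y : Y)
    (S : Y →ₗ[ℝ] Y)
    (R : X →ₗ[ℝ] X) (hR : ∀ a b, ⟪R a, b⟫ = ⟪a, R b⟫)
    (ubar : ℝ → X) (hubar : ∀ t, ubar t = (J : ℝ)⁻¹ • ∑ j, u t j)
    (Gbar : ℝ → Y)
    (E : ℝ → Fin J → Fin J → ℝ)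
    (hE : ∀ t j k, E t j k
        = ⟪S (G (u t j) - y), S (G (u t k) - Gbar t)⟫
          + ⟪R (R (u t j)), u t k - ubar t⟫)
    (hflow : ∀ t ∈ Set.Ico (0 : ℝ) Tend, ∀ j,
      HasDerivWithinAt (fun s => u s j)
        (-((J : ℝ)⁻¹ • ∑ k, E t j k • (u t k - ubar t))) (Set.Ico (0 : ℝ) Tend) t)
    (C : ℝ → X → X)
    (hC : ∀ t v, C t v = (J : ℝ)⁻¹ • ∑ j, ⟪v, u t j - ubar t⟫ • (u t j - ubar t)) :
    ∀ v : X,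
      (∀ t ∈ Set.Ico (0 : ℝ) Tend,
        HasDerivWithinAt (fun s => ⟪v, C s v⟫)
          (-2 * ‖R (C t v)‖ ^ 2
            - 2 * ((J : ℝ)⁻¹) ^ 2 *
              ‖S (∑ j, ⟪v, u t j - ubar t⟫ • (G (u t j) - Gbar t))‖ ^ 2)
          (Set.Ico (0 : ℝ) Tend) t
        ∧ (-2 * ‖R (C t v)‖ ^ 2
            - 2 * ((J : ℝ)⁻¹) ^ 2 *
              ‖S (∑ j, ⟪v, u t j - ubar t⟫ • (G (u t j) - Gbar t))‖ ^ 2) ≤ 0)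
      ∧ AntitoneOn (fun s => ⟪v, C s v⟫) (Set.Ico (0 : ℝ) Tend) := by
  intro v
  have hderiv : ∀ t ∈ Set.Ico (0 : ℝ) Tend, HasDerivWithinAt (fun s => ⟪v, C s v⟫)
      (-2 * ‖R (C t v)‖ ^ 2
        - 2 * ((J : ℝ)⁻¹) ^ 2 * ‖S (∑ j, ⟪v, u t j - ubar t⟫ • (G (u t j) - Gbar t))‖ ^ 2)
      (Set.Ico (0 : ℝ) Tend) t := fun t ht =>
    hasDerivWithinAt_inner_teki_covariance hJ hR hubar hC (hE t) (hflow t ht) v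
  have hnonpos : ∀ t, -2 * ‖R (C t v)‖ ^ 2
      - 2 * ((J : ℝ)⁻¹) ^ 2 * ‖S (∑ j, ⟪v, u t j - ubar t⟫ • (G (u t j) - Gbar t))‖ ^ 2 ≤ 0 :=
    fun t => by nlinarith [sq_nonneg (‖R (C t v)‖), sq_nonneg ((J : ℝ)⁻¹ *
      ‖S (∑ j, ⟪v, u t j - ubar t⟫ • (G (u t j) - Gbar t))‖)]
  refine ⟨fun t ht => ⟨hderiv t ht, hnonpos t⟩, ?_⟩
  exact antitoneOn_of_hasDerivWithinAt_nonpos (convex_Ico 0 Tend)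
    (fun t ht => (hderiv t ht).continuousWithinAt)
    (fun t ht => (hderiv t (interior_subset ht)).mono interior_subset) fun t _ => hnonpos t

/-- Along the TEKI flow, with `R = C₀^{-1/2}` and `S = Γ^{-1/2}`, the quadratic form
`t ↦ ⟨v, C(t)v⟩` of the empirical covariance has derivative
`-2‖C₀^{-1/2}C(t)v‖² - 2J⁻²‖Γ^{-1/2}∑ⱼ⟨v,uⱼ-ū⟩(G(uⱼ)-Ḡ)‖² ≤ 0`;
in particular it is nonincreasing. -/
theorem teki_covariance_quadratic_form_decreasing
    {X Y : Type*} [NormedAddCommGroup X] [InnerProductSpace ℝ X] [FiniteDimensional ℝ X]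
    [NormedAddCommGroup Y] [InnerProductSpace ℝ Y] [FiniteDimensional ℝ Y]
    (J : ℕ) (hJ : 0 < J) (Tend : ℝ) (hT : 0 < Tend)
    (u : ℝ → Fin J → X)
    (G : X → Y) (y : Y)
    (S : Y →ₗ[ℝ] Y) (hS : ∀ a b, ⟪S a, b⟫ = ⟪a, S b⟫)
    (R : X →ₗ[ℝ] X) (hR : ∀ a b, ⟪R a, b⟫ = ⟪a, R b⟫)
    (ubar : ℝ → X) (hubar : ∀ t, ubar t = (J : ℝ)⁻¹ • ∑ j, u t j)
    (Gbar : ℝ → Y) (hGbar : ∀ t, Gbar t = (J : ℝ)⁻¹ • ∑ m, G (u t m))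
    (E : ℝ → Fin J → Fin J → ℝ)
    (hE : ∀ t j k, E t j k
        = ⟪S (G (u t j) - y), S (G (u t k) - Gbar t)⟫
          + ⟪R (R (u t j)), u t k - ubar t⟫)
    (hflow : ∀ t ∈ Set.Ico (0 : ℝ) Tend, ∀ j,
      HasDerivWithinAt (fun s => u s j)
        (-((J : ℝ)⁻¹ • ∑ k, E t j k • (u t k - ubar t))) (Set.Ico (0 : ℝ) Tend) t)
    (C : ℝ → X → X)
    (hC : ∀ t v, C t v = (J : ℝ)⁻¹ • ∑ j, ⟪v, u t j - ubar t⟫ • (u t j - ubar t)) :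
    ∀ v : X,
      (∀ t ∈ Set.Ico (0 : ℝ) Tend,
        HasDerivWithinAt (fun s => ⟪v, C s v⟫)
          (-2 * ‖R (C t v)‖ ^ 2
            - 2 * ((J : ℝ)⁻¹) ^ 2 *
              ‖S (∑ j, ⟪v, u t j - ubar t⟫ • (G (u t j) - Gbar t))‖ ^ 2)
          (Set.Ico (0 : ℝ) Tend) t
        ∧ (-2 * ‖R (C t v)‖ ^ 2
            - 2 * ((J : ℝ)⁻¹) ^ 2 *
              ‖S (∑ j, ⟪v, u t j - ubar t⟫ • (G (u t j) - Gbar t))‖ ^ 2) ≤ 0)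
      ∧ AntitoneOn (fun s => ⟪v, C s v⟫) (Set.Ico (0 : ℝ) Tend) :=
  teki_covariance_quadratic_form_decreasing_general J hJ Tend u G y S R hR ubar hubar Gbar E hE
    hflow C hC
end

section
/- (Constrained KKT vs unconstrained minimizer.) Let Ω be a symmetric positive definite operator on a finite-dimensional inner product space X, ℬ ⊆ X a subspace, P_ℬ the orthogonal projection onto ℬ and P_⊥ = I - P_ℬ. Let Ω_ℬ = P_ℬ Ω P_ℬ restricted to ℬ (positive definite on ℬ). Suppose u† ∈ X and u†_ℬ ∈ ℬ satisfy Ω(u† + u⊥_0) = b and Ω(u†_ℬ + u⊥_0) = b + v† for some fixed u⊥_0, b ∈ X and some v† orthogonal to ℬ. Then u†_ℬ = P_ℬ u† + Ω_ℬ^{-1} P_ℬ Ω P_⊥ u†. In particular, if ⟨u, Ω v⟩ = 0 for all u ∈ ℬ and v ⊥ ℬ, then u†_ℬ = P_ℬ u†. -/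
open scoped RealInnerProductSpace

namespace Submodule

variable {X : Type*} [NormedAddCommGroup X] [InnerProductSpace ℝ X]
  (B : Submodule ℝ X) [B.HasOrthogonalProjection]

theorem orthogonalProjectionOnto_eq_of_sub_mem_orthogonal {a c : X} (h : a - c ∈ Bᗮ) :
    B.orthogonalProjectionOnto a = B.orthogonalProjectionOnto c := by
  rw [← sub_eq_zero, ← map_sub]
  exact orthogonalProjectionOnto_apply_of_mem_orthogonal h

theorem eq_orthogonalProjectionOnto_add_compressionInv {T : X →ₗ[ℝ] X} {TB TBinv : B →ₗ[ℝ] B}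
    (hTB : ∀ c : B, TB c = B.orthogonalProjectionOnto (T c))
    (hinv : ∀ c, TBinv (TB c) = c) {x : X} {y : B}
    (hy : B.orthogonalProjectionOnto (T y) = B.orthogonalProjectionOnto (T x)) :
    y = B.orthogonalProjectionOnto x
      + TBinv (B.orthogonalProjectionOnto (T (x - B.orthogonalProjectionOnto x))) := by
  have hcompressed : TB y = TB (B.orthogonalProjectionOnto x)
      + B.orthogonalProjectionOnto (T (x - B.orthogonalProjectionOnto x)) := by
    rw [hTB, hTB, hy, ← map_add, ← map_add, add_sub_cancel]
  rw [← hinv y, hcompressed, map_add, hinv]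

theorem orthogonalProjectionOnto_map_sub_orthogonalProjectionOnto_eq_zero {T : X →ₗ[ℝ] X}
    (hT : ∀ x ∈ B, ∀ w ∈ Bᗮ, ⟪x, T w⟫ = 0) (u : X) :
    B.orthogonalProjectionOnto (T (u - B.orthogonalProjectionOnto u)) = 0 :=
  orthogonalProjectionOnto_apply_of_mem_orthogonal fun x hx =>
    hT x hx _ (B.sub_starProjection_mem_orthogonal u)

end Submodule

theorem constrained_kkt_vs_unconstrained_general
    {X : Type*} [NormedAddCommGroup X] [InnerProductSpace ℝ X] [FiniteDimensional ℝ X]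
    (Omega : X →ₗ[ℝ] X)
    (B : Submodule ℝ X)
    (OmegaB : B →ₗ[ℝ] B)
    (hOB : ∀ b : B, OmegaB b = B.orthogonalProjectionOnto (Omega b))
    (OmegaBinv : B →ₗ[ℝ] B)
    (hinv1 : ∀ b, OmegaBinv (OmegaB b) = b)
    (udag : X) (udagB : B) (uperp0 b v : X)
    (hv : v ∈ Bᗮ)
    (h1 : Omega (udag + uperp0) = b)
    (h2 : Omega ((udagB : X) + uperp0) = b + v) :
    (udagB : X)
      = (B.orthogonalProjectionOnto udag : X)
        + (OmegaBinv (B.orthogonalProjectionOnto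
            (Omega (udag - (B.orthogonalProjectionOnto udag : X)))) : X)
    ∧ ((∀ x ∈ B, ∀ w ∈ Bᗮ, ⟪x, Omega w⟫ = 0) →
        (udagB : X) = (B.orthogonalProjectionOnto udag : X)) := by
  have hdiff : Omega udagB - Omega udag = v := by
    rw [← add_sub_add_right_eq_sub _ _ (Omega uperp0), ← map_add, ← map_add, h1, h2,
      add_sub_cancel_left]
  have hproj : B.orthogonalProjectionOnto (Omega udagB) = B.orthogonalProjectionOnto (Omega udag) :=
    B.orthogonalProjectionOnto_eq_of_sub_mem_orthogonal (hdiff ▸ hv)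
  have hformula := B.eq_orthogonalProjectionOnto_add_compressionInv hOB hinv1 hproj
  refine ⟨congrArg Subtype.val hformula, fun huncorr => ?_⟩
  rw [hformula, B.orthogonalProjectionOnto_map_sub_orthogonalProjectionOnto_eq_zero huncorr,
    map_zero, add_zero]

/-- Constrained vs unconstrained KKT points: with `Ω` symmetric positive definite,
`u†_ℬ = P_ℬ u† + Ω_ℬ⁻¹ P_ℬ Ω P_⊥ u†`; and if `ℬ` and `ℬᗮ` are uncorrelated through `Ω`
then `u†_ℬ = P_ℬ u†`. -/
theorem constrained_kkt_vs_unconstrained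
    {X : Type*} [NormedAddCommGroup X] [InnerProductSpace ℝ X] [FiniteDimensional ℝ X]
    (Omega : X →ₗ[ℝ] X)
    (hsym : ∀ a b, ⟪Omega a, b⟫ = ⟪a, Omega b⟫)
    (hpd : ∀ v : X, v ≠ 0 → 0 < ⟪v, Omega v⟫)
    (B : Submodule ℝ X)
    (OmegaB : B →ₗ[ℝ] B)
    (hOB : ∀ b : B, OmegaB b = B.orthogonalProjectionOnto (Omega b))
    (OmegaBinv : B →ₗ[ℝ] B)
    (hinv1 : ∀ b, OmegaBinv (OmegaB b) = b)
    (hinv2 : ∀ b, OmegaB (OmegaBinv b) = b)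
    (udag : X) (udagB : B) (uperp0 b v : X)
    (hv : v ∈ Bᗮ)
    (h1 : Omega (udag + uperp0) = b)
    (h2 : Omega ((udagB : X) + uperp0) = b + v) :
    (udagB : X)
      = (B.orthogonalProjectionOnto udag : X)
        + (OmegaBinv (B.orthogonalProjectionOnto
            (Omega (udag - (B.orthogonalProjectionOnto udag : X)))) : X)
    ∧ ((∀ x ∈ B, ∀ w ∈ Bᗮ, ⟪x, Omega w⟫ = 0) →
        (udagB : X) = (B.orthogonalProjectionOnto udag : X)) :=
  constrained_kkt_vs_unconstrained_general Omega B OmegaB hOB OmegaBinv hinv1 udag udagB uperp0 b v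
    hv h1 h2
end

section
/- If D : [0,∞) → Sym(ℬ) is a differentiable curve of symmetric operators on a finite-dimensional inner product space ℬ satisfying D'(t) = -2 D(t)², with D(0) symmetric positive definite with minimum eigenvalue m_0 > 0, then D(t) = (D(0)^{-1} + 2tI)^{-1}; in particular every eigenvector v of D(0) with eigenvalue λ(0) remains an eigenvector of D(t) with eigenvalue λ(t) = 1/(λ(0)^{-1} + 2t), and for every unit vector v, ⟨v, D(t)v⟩ ≥ 1/(m_0^{-1} + 2t). -/
/-!
With `K(t) = D(0)⁻¹ + 2t`, so that `K' = 2`, the defect `Q = D K - 1` solves the linear equation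
`Q' = -2 D Q` with `Q(0) = 0`, hence vanishes by Grönwall; likewise `K D - 1 = 0`. So
`D(t) = K(t)⁻¹`, and an eigenvector of `D(0)` for `λ` is one of `K(t)` for `λ⁻¹ + 2t`.
For the lower bound, `0 ≤ K(t) ≤ c := m₀⁻¹ + 2t`, so Cauchy–Schwarz for the form `⟪K ·, ·⟫`
gives `‖K u‖² ≤ c ⟪K u, u⟫`; at `u = D(t) v` this reads `1 ≤ c ⟪v, D(t) v⟫`.
-/
open scoped RealInnerProductSpace
open Set

theorem eq_zero_of_norm_derivWithin_Ici_le {E : Type*} [NormedAddCommGroup E] [NormedSpace ℝ E]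
    {f f' : ℝ → E} {a : ℝ → ℝ} (ha : ContinuousOn a (Ici 0))
    (hf : ∀ s ∈ Ici (0 : ℝ), HasDerivWithinAt f (f' s) (Ici 0) s)
    (bound : ∀ s ∈ Ici (0 : ℝ), ‖f' s‖ ≤ a s * ‖f s‖) (h₀ : f 0 = 0) {t : ℝ} (ht : 0 ≤ t) :
    f t = 0 := by
  obtain ⟨M, hM⟩ := isCompact_Icc.exists_bound_of_continuousOn (ha.mono fun s hs => hs.1)
  refine eq_zero_of_abs_deriv_le_mul_abs_self_of_eq_zero_right (K := M)
    (fun s hs => (hf s hs.1).continuousWithinAt.mono Icc_subset_Ici_self)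
    (fun s hs => (hf s hs.1).mono (Ici_subset_Ici.2 hs.1)) h₀ (fun s hs => ?_) t ⟨ht, le_rfl⟩
  calc ‖f' s‖ ≤ a s * ‖f s‖ := bound s hs.1
    _ ≤ M * ‖f s‖ := by
      gcongr
      exact (le_abs_self _).trans (hM s (Ico_subset_Icc_self hs))

section Riccati

variable {R : Type*} [NormedRing R] [NormedAlgebra ℝ R] {D : ℝ → R}

theorem hasDerivAt_add_two_mul_smul_one (K₀ : R) (s : ℝ) :
    HasDerivAt (fun s : ℝ => K₀ + (2 * s) • (1 : R)) ((2 : ℝ) • 1) s := by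
  simpa using (((hasDerivAt_id s).const_mul 2).smul_const (1 : R)).const_add K₀

theorem norm_neg_two_smul_mul_le (x y : R) : ‖(-2 : ℝ) • (x * y)‖ ≤ 2 * ‖x‖ * ‖y‖ := by
  rw [norm_smul, mul_assoc]
  norm_num
  exact norm_mul_le x y

variable (hD : ∀ t ∈ Ici (0 : ℝ), HasDerivWithinAt D ((-2 : ℝ) • (D t * D t)) (Ici 0) t)
include hD

theorem riccati_mul_inverse_eq_one {K₀ : R} (h₀ : D 0 * K₀ = 1) {t : ℝ} (ht : 0 ≤ t) :
    D t * (K₀ + (2 * t) • 1) = 1 := by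
  set Q : ℝ → R := fun s => D s * (K₀ + (2 * s) • 1) - 1
  have hQ : ∀ s ∈ Ici (0 : ℝ), HasDerivWithinAt Q ((-2 : ℝ) • (D s * Q s)) (Ici 0) s := by
    intro s hs
    refine (((hD s hs).fun_mul (hasDerivAt_add_two_mul_smul_one K₀ s).hasDerivWithinAt).sub_const
      1).congr_deriv ?_
    simp only [Q, mul_sub, smul_sub, smul_mul_assoc, mul_smul_comm, mul_one, mul_assoc]
    module
  refine sub_eq_zero.1 (eq_zero_of_norm_derivWithin_Ici_le (a := fun s => 2 * ‖D s‖)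
    (continuousOn_const.mul fun s hs => (hD s hs).continuousWithinAt.norm) hQ
    (fun s _ => norm_neg_two_smul_mul_le _ _) ?_ ht)
  simp [Q, h₀]

theorem riccati_inverse_mul_eq_one {K₀ : R} (h₀ : K₀ * D 0 = 1) {t : ℝ} (ht : 0 ≤ t) :
    (K₀ + (2 * t) • 1) * D t = 1 := by
  set P : ℝ → R := fun s => (K₀ + (2 * s) • 1) * D s - 1
  have hP : ∀ s ∈ Ici (0 : ℝ), HasDerivWithinAt P ((-2 : ℝ) • (P s * D s)) (Ici 0) s := by
    intro s hs
    refine (((hasDerivAt_add_two_mul_smul_one K₀ s).hasDerivWithinAt.fun_mul (hD s hs)).sub_const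
      1).congr_deriv ?_
    simp only [P, sub_mul, smul_sub, smul_mul_assoc, mul_smul_comm, one_mul, mul_assoc]
    module
  refine sub_eq_zero.1 (eq_zero_of_norm_derivWithin_Ici_le (a := fun s => 2 * ‖D s‖)
    (continuousOn_const.mul fun s hs => (hD s hs).continuousWithinAt.norm) hP
    (fun s _ => (norm_neg_two_smul_mul_le _ _).trans_eq (by ring)) ?_ ht)
  simp [P, h₀]

end Riccati

theorem ContinuousLinearMap.apply_eq_inv_smul_of_mul_eq_one {𝕜 E : Type*} [Field 𝕜]
    [AddCommGroup E] [Module 𝕜 E] [TopologicalSpace E] {A K : E →L[𝕜] E} (h : A * K = 1)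
    {v : E} {c : 𝕜} (hv : K v = c • v) : A v = c⁻¹ • v := by
  have hAK : c • A v = v := by rw [← map_smul, ← hv]; exact DFunLike.congr_fun h v
  rcases eq_or_ne c 0 with rfl | hc
  · obtain rfl : v = 0 := by simpa using hAK.symm
    simp
  · exact (eq_inv_smul_iff₀ hc).2 hAK

section Positive

variable {E : Type*} [NormedAddCommGroup E] [InnerProductSpace ℝ E]

theorem mul_sq_norm_le_inner_of_forall_norm_eq_one {A : E →L[ℝ] E} {m : ℝ}
    (h : ∀ v, ‖v‖ = 1 → m ≤ ⟪v, A v⟫) (w : E) : m * ‖w‖ ^ 2 ≤ ⟪w, A w⟫ := by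
  rcases eq_or_ne w 0 with rfl | hw
  · simp
  have hunit := h (‖w‖⁻¹ • w) (norm_smul_inv_norm hw)
  rw [map_smul, real_inner_smul_left, real_inner_smul_right] at hunit
  have hw' : ‖w‖ ≠ 0 := norm_ne_zero_iff.2 hw
  calc m * ‖w‖ ^ 2 ≤ ‖w‖⁻¹ * (‖w‖⁻¹ * ⟪w, A w⟫) * ‖w‖ ^ 2 := by gcongr
    _ = ⟪w, A w⟫ := by field_simp

namespace ContinuousLinearMap

theorem IsPositive.of_mul_eq_one {A A' : E →L[ℝ] E} (hA : A.IsPositive) (h : A * A' = 1) :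
    A'.IsPositive := by
  have hAA' (x : E) : A (A' x) = x := DFunLike.congr_fun h x
  refine (isPositive_iff _).2 ⟨fun x y => ?_, fun x => ?_⟩
  · calc ⟪A' x, y⟫ = ⟪A' x, A (A' y)⟫ := by rw [hAA']
      _ = ⟪A (A' x), A' y⟫ := (hA.inner_left_eq_inner_right _ _).symm
      _ = ⟪x, A' y⟫ := by rw [hAA']
  · simpa only [hAA', real_inner_comm x] using hA.inner_nonneg_right (A' x)

theorem inner_apply_le_inv_mul_sq_norm_of_mul_eq_one {A A' : E →L[ℝ] E} {m : ℝ} (hm : 0 < m)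
    (hA : ∀ x, m * ‖x‖ ^ 2 ≤ ⟪x, A x⟫) (h : A * A' = 1) (w : E) :
    ⟪A' w, w⟫ ≤ m⁻¹ * ‖w‖ ^ 2 := by
  have hcoer := hA (A' w)
  rw [show A (A' w) = w from DFunLike.congr_fun h w] at hcoer
  have hcs := real_inner_le_norm (A' w) w
  rw [inv_mul_eq_div, le_div_iff₀ hm]
  nlinarith [norm_nonneg (A' w), norm_nonneg w, sq_nonneg (‖w‖ - m * ‖A' w‖)]

theorem IsPositive.inner_apply_sq_le {T : E →L[ℝ] E} (hT : T.IsPositive) (x y : E) :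
    ⟪T x, y⟫ ^ 2 ≤ ⟪T x, x⟫ * ⟪T y, y⟫ := by
  have hquad (s : ℝ) : 0 ≤ ⟪T y, y⟫ * (s * s) + 2 * ⟪T x, y⟫ * s + ⟪T x, x⟫ := by
    have h := hT.inner_nonneg_left (x + s • y)
    have hsymm : ⟪T y, x⟫ = ⟪T x, y⟫ := by
      rw [hT.inner_left_eq_inner_right, real_inner_comm]
    simp only [map_add, map_smul, inner_add_left, inner_add_right, real_inner_smul_left,
      real_inner_smul_right, hsymm] at h
    linarith
  have hdisc := discrim_le_zero hquad
  rw [discrim] at hdisc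
  linarith

theorem IsPositive.sq_norm_apply_le {T : E →L[ℝ] E} (hT : T.IsPositive) {c : ℝ}
    (hTc : ∀ w, ⟪T w, w⟫ ≤ c * ‖w‖ ^ 2) (u : E) : ‖T u‖ ^ 2 ≤ c * ⟪T u, u⟫ := by
  rcases eq_or_ne (T u) 0 with hTu | hTu
  · simp [hTu]
  have hpos : 0 < ‖T u‖ ^ 2 := by positivity
  have hcs := hT.inner_apply_sq_le u (T u)
  rw [real_inner_self_eq_norm_sq] at hcs
  have hTTu := hTc (T u)
  nlinarith [hT.inner_nonneg_left u]

theorem inv_le_inner_apply_of_mul_eq_one {K A : E →L[ℝ] E} (hK : K.IsPositive) {c : ℝ}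
    (hKc : ∀ w, ⟪K w, w⟫ ≤ c * ‖w‖ ^ 2) (h : K * A = 1) {v : E} (hv : ‖v‖ = 1) :
    c⁻¹ ≤ ⟪v, A v⟫ := by
  have hKA : K (A v) = v := DFunLike.congr_fun h v
  have hbound := hK.sq_norm_apply_le hKc (A v)
  have hnonneg := hK.inner_nonneg_left (A v)
  rw [hKA, hv] at hbound
  rw [hKA] at hnonneg
  have hc : 0 < c := by nlinarith
  rw [inv_le_iff_one_le_mul₀' hc]
  linarith

end ContinuousLinearMap

end Positive

open ContinuousLinearMap in
theorem operator_riccati_solution_general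
    {B : Type*} [NormedAddCommGroup B] [InnerProductSpace ℝ B]
    (D : ℝ → B →L[ℝ] B)
    (hsymm : ∀ t ∈ Set.Ici (0 : ℝ), ∀ a b : B, ⟪D t a, b⟫ = ⟪a, D t b⟫)
    (hflow : ∀ t ∈ Set.Ici (0 : ℝ),
      HasDerivWithinAt D ((-2 : ℝ) • ((D t).comp (D t))) (Set.Ici (0 : ℝ)) t)
    (m0 : ℝ) (hm0 : 0 < m0)
    (hmin : ∀ v : B, ‖v‖ = 1 → m0 ≤ ⟪v, D 0 v⟫)
    (D0inv : B →L[ℝ] B)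
    (hinv1 : (D 0).comp D0inv = ContinuousLinearMap.id ℝ B)
    (hinv2 : D0inv.comp (D 0) = ContinuousLinearMap.id ℝ B) :
    (∀ t ∈ Set.Ici (0 : ℝ),
        (D t).comp (D0inv + (2 * t) • ContinuousLinearMap.id ℝ B)
          = ContinuousLinearMap.id ℝ B
      ∧ (D0inv + (2 * t) • ContinuousLinearMap.id ℝ B).comp (D t)
          = ContinuousLinearMap.id ℝ B)
    ∧ (∀ (v : B) (lam : ℝ), D 0 v = lam • v →
        ∀ t ∈ Set.Ici (0 : ℝ), D t v = (lam⁻¹ + 2 * t)⁻¹ • v)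
    ∧ (∀ t ∈ Set.Ici (0 : ℝ), ∀ v : B, ‖v‖ = 1 →
        (m0⁻¹ + 2 * t)⁻¹ ≤ ⟪v, D t v⟫) := by
  simp only [← mul_def, ← one_def] at hflow hinv1 hinv2 ⊢
  have hcoer := mul_sq_norm_le_inner_of_forall_norm_eq_one hmin
  have hD0 : (D 0).IsPositive := (isPositive_iff _).2
    ⟨hsymm 0 self_mem_Ici, fun x => by nlinarith [hcoer x, real_inner_comm x (D 0 x)]⟩
  have hK (t : ℝ) (ht : 0 ≤ t) : (D0inv + (2 * t) • 1).IsPositive :=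
    (hD0.of_mul_eq_one hinv1).add (isPositive_one.smul_of_nonneg (by positivity))
  have hKle (t : ℝ) (w : B) : ⟪(D0inv + (2 * t) • 1) w, w⟫ ≤ (m0⁻¹ + 2 * t) * ‖w‖ ^ 2 := by
    have := inner_apply_le_inv_mul_sq_norm_of_mul_eq_one hm0 hcoer hinv1 w
    simp only [add_apply, smul_apply, one_apply_eq_self, inner_add_left, real_inner_smul_left,
      real_inner_self_eq_norm_sq]
    linarith
  refine ⟨fun t ht => ⟨riccati_mul_inverse_eq_one hflow hinv1 ht,
    riccati_inverse_mul_eq_one hflow hinv2 ht⟩, fun v lam hv t ht => ?_, fun t ht v hv => ?_⟩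
  · refine apply_eq_inv_smul_of_mul_eq_one (riccati_mul_inverse_eq_one hflow hinv1 ht) ?_
    simp [apply_eq_inv_smul_of_mul_eq_one hinv2 hv, add_smul]
  · exact inv_le_inner_apply_of_mul_eq_one (hK t ht) (hKle t)
      (riccati_inverse_mul_eq_one hflow hinv2 ht) hv

/-- Operator Riccati equation: if `D' = -2D²` with `D(0)` symmetric positive definite with
minimum eigenvalue `m₀ > 0`, then `D(t) = (D(0)⁻¹ + 2tI)⁻¹`; eigenvectors of `D(0)` remain
eigenvectors with eigenvalue `(λ(0)⁻¹ + 2t)⁻¹`, and `⟨v, D(t)v⟩ ≥ (m₀⁻¹ + 2t)⁻¹` for unit `v`. -/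
theorem operator_riccati_solution
    {B : Type*} [NormedAddCommGroup B] [InnerProductSpace ℝ B] [FiniteDimensional ℝ B]
    (D : ℝ → B →L[ℝ] B)
    (hsymm : ∀ t ∈ Set.Ici (0 : ℝ), ∀ a b : B, ⟪D t a, b⟫ = ⟪a, D t b⟫)
    (hflow : ∀ t ∈ Set.Ici (0 : ℝ),
      HasDerivWithinAt D ((-2 : ℝ) • ((D t).comp (D t))) (Set.Ici (0 : ℝ)) t)
    (m0 : ℝ) (hm0 : 0 < m0)
    (hmin : ∀ v : B, ‖v‖ = 1 → m0 ≤ ⟪v, D 0 v⟫)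
    (hmin' : ∃ v : B, ‖v‖ = 1 ∧ ⟪v, D 0 v⟫ = m0)
    (D0inv : B →L[ℝ] B)
    (hinv1 : (D 0).comp D0inv = ContinuousLinearMap.id ℝ B)
    (hinv2 : D0inv.comp (D 0) = ContinuousLinearMap.id ℝ B) :
    (∀ t ∈ Set.Ici (0 : ℝ),
        (D t).comp (D0inv + (2 * t) • ContinuousLinearMap.id ℝ B)
          = ContinuousLinearMap.id ℝ B
      ∧ (D0inv + (2 * t) • ContinuousLinearMap.id ℝ B).comp (D t)
          = ContinuousLinearMap.id ℝ B)
    ∧ (∀ (v : B) (lam : ℝ), D 0 v = lam • v →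
        ∀ t ∈ Set.Ici (0 : ℝ), D t v = (lam⁻¹ + 2 * t)⁻¹ • v)
    ∧ (∀ t ∈ Set.Ici (0 : ℝ), ∀ v : B, ‖v‖ = 1 →
        (m0⁻¹ + 2 * t)⁻¹ ≤ ⟪v, D t v⟫) :=
  operator_riccati_solution_general D hsymm hflow m0 hm0 hmin D0inv hinv1 hinv2
end

section
/- (Algebraic convergence of linear TEKI.) Suppose e : [0,∞) → ℬ is differentiable with de/dt = -C(t) Ω_ℬ e(t), where Ω_ℬ is symmetric positive definite on ℬ, C(t) is symmetric positive semidefinite, and D(t) := Ω_ℬ^{1/2} C(t) Ω_ℬ^{1/2} satisfies ⟨w, D(t)w⟩ ≥ ‖w‖²/(m_0^{-1} + 2t) for all w ∈ ℬ and some m_0 > 0. Then with ‖u‖²_Z := ⟨Ω_ℬ u, u⟩, one has ‖e(t)‖²_Z ≤ ‖e(0)‖²_Z / (1 + 2 m_0 t) for all t ≥ 0; in particular e(t) → 0 at rate O(t^{-1/2}). -/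
open scoped RealInnerProductSpace
open Set Filter Topology

/- With `H = Ω_ℬ^{1/2}` the `Z`-norm is `‖e‖²_Z = ‖H e‖²`, whose derivative along the flow is
`-2⟪H e, D(t) (H e)⟫ ≤ -2‖H e‖² / (m₀⁻¹ + 2t)`. Hence `(1 + 2m₀t) ‖e(t)‖²_Z` is nonincreasing,
which is the decay estimate. Since `H² = Ω_ℬ` is positive definite, `H` is injective, so in
finite dimension it is a closed embedding and `H e(t) → 0` forces `e(t) → 0`. -/

theorem le_div_one_add_mul_of_hasDerivWithinAt {V V' : ℝ → ℝ} {c : ℝ} (hc : 0 < c)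
    (hV : ∀ t ∈ Ici (0 : ℝ), HasDerivWithinAt V (V' t) (Ici 0) t)
    (hV' : ∀ t ∈ Ici (0 : ℝ), V' t ≤ -(V t / (c⁻¹ + t))) :
    ∀ t ∈ Ici (0 : ℝ), V t ≤ V 0 / (1 + c * t) := by
  have hpos : ∀ t ∈ Ici (0 : ℝ), 0 < 1 + c * t := fun t (ht : 0 ≤ t) => by positivity
  set G : ℝ → ℝ := fun t => (1 + c * t) * V t
  have hG : ∀ t ∈ Ici (0 : ℝ), HasDerivWithinAt G (c * V t + (1 + c * t) * V' t) (Ici 0) t :=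
    fun t ht =>
      ((((hasDerivAt_id t).const_mul c).const_add 1).hasDerivWithinAt.mul (hV t ht)).congr_deriv
        (by simp)
  have hG'_nonpos : ∀ t ∈ Ici (0 : ℝ), c * V t + (1 + c * t) * V' t ≤ 0 := fun t ht => by
    have hfactor : (1 + c * t) * (V t / (c⁻¹ + t)) = c * V t := by
      rw [show c⁻¹ + t = (1 + c * t) / c by field_simp, div_div_eq_mul_div]
      field_simp [(hpos t ht).ne']
    linarith [mul_le_mul_of_nonneg_left (hV' t ht) (hpos t ht).le]
  have hG_anti : AntitoneOn G (Ici 0) :=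
    antitoneOn_of_hasDerivWithinAt_nonpos (f' := fun t => c * V t + (1 + c * t) * V' t)
      (convex_Ici 0) (fun t ht => (hG t ht).continuousWithinAt)
      (fun t ht => (hG t (interior_subset ht)).mono interior_subset)
      (fun t ht => hG'_nonpos t (interior_subset ht))
  intro t ht
  rw [le_div_iff₀ (hpos t ht), mul_comm]
  simpa [G] using hG_anti self_mem_Ici ht ht

theorem ker_eq_bot_of_inner_map_self_pos {E : Type*} [NormedAddCommGroup E]
    [InnerProductSpace ℝ E] {T : E →ₗ[ℝ] E} (hT : ∀ v : E, v ≠ 0 → 0 < ⟪v, T v⟫) :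
    LinearMap.ker T = ⊥ :=
  (Submodule.eq_bot_iff _).2 fun v hv => by
    by_contra hne
    simpa [LinearMap.mem_ker.1 hv] using hT v hne

theorem inner_map_map_apply_eq_norm_sq {E : Type*} [NormedAddCommGroup E]
    [InnerProductSpace ℝ E] {T : E →ₗ[ℝ] E} (hT : ∀ a b : E, ⟪T a, b⟫ = ⟪a, T b⟫) (v : E) :
    ⟪T (T v), v⟫ = ‖T v‖ ^ 2 := by
  rw [hT, real_inner_comm, real_inner_self_eq_norm_sq]

theorem tendsto_zero_of_norm_sq_tendsto_zero {α E : Type*} [SeminormedAddCommGroup E]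
    {l : Filter α} {f : α → E} (hf : Tendsto (fun x => ‖f x‖ ^ 2) l (𝓝 0)) :
    Tendsto f l (𝓝 0) := by
  rw [tendsto_zero_iff_norm_tendsto_zero]
  simpa [Real.sqrt_sq (norm_nonneg _)] using hf.sqrt

theorem teki_linear_algebraic_convergence_general
    {B : Type*} [NormedAddCommGroup B] [InnerProductSpace ℝ B] [FiniteDimensional ℝ B]
    (OmegaB Ohalf : B →ₗ[ℝ] B)
    (hOpd : ∀ v : B, v ≠ 0 → 0 < ⟪v, OmegaB v⟫)
    (hhalfsym : ∀ a b : B, ⟪Ohalf a, b⟫ = ⟪a, Ohalf b⟫)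
    (hhalf : Ohalf ∘ₗ Ohalf = OmegaB)
    (C : ℝ → B →ₗ[ℝ] B)
    (m0 : ℝ) (hm0 : 0 < m0)
    (hD : ∀ t ∈ Set.Ici (0 : ℝ), ∀ w : B,
      ‖w‖ ^ 2 / (m0⁻¹ + 2 * t) ≤ ⟪w, Ohalf (C t (Ohalf w))⟫)
    (e : ℝ → B)
    (hflow : ∀ t ∈ Set.Ici (0 : ℝ),
      HasDerivWithinAt e (-(C t (OmegaB (e t)))) (Set.Ici (0 : ℝ)) t) :
    (∀ t ∈ Set.Ici (0 : ℝ),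
      ⟪OmegaB (e t), e t⟫ ≤ ⟪OmegaB (e 0), e 0⟫ / (1 + 2 * m0 * t))
    ∧ Filter.Tendsto e Filter.atTop (nhds 0) := by
  subst hhalf
  have hZ (t : ℝ) : ⟪(Ohalf ∘ₗ Ohalf) (e t), e t⟫ = ‖Ohalf (e t)‖ ^ 2 :=
    inner_map_map_apply_eq_norm_sq hhalfsym (e t)
  have hderiv : ∀ t ∈ Ici (0 : ℝ), HasDerivWithinAt (fun s => ‖Ohalf (e s)‖ ^ 2)
      (2 * ⟪Ohalf (e t), Ohalf (-(C t (Ohalf (Ohalf (e t)))))⟫) (Ici 0) t := fun t ht =>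
    (Ohalf.toContinuousLinearMap.hasFDerivAt.comp_hasDerivWithinAt t (hflow t ht)).norm_sq
  have hdecay : ∀ t ∈ Ici (0 : ℝ), ‖Ohalf (e t)‖ ^ 2 ≤ ‖Ohalf (e 0)‖ ^ 2 / (1 + 2 * m0 * t) := by
    refine le_div_one_add_mul_of_hasDerivWithinAt (by positivity) hderiv fun t ht => ?_
    have h2 : (2 * m0)⁻¹ + t = (m0⁻¹ + 2 * t) / 2 := by field_simp
    rw [h2, map_neg, inner_neg_right, div_div_eq_mul_div, mul_comm _ (2 : ℝ), mul_div_assoc]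
    linarith [hD t ht (Ohalf (e t))]
  refine ⟨fun t ht => by simpa only [hZ] using hdecay t ht, ?_⟩
  have hHe : Tendsto (fun t => ‖Ohalf (e t)‖ ^ 2) atTop (𝓝 0) := by
    refine squeeze_zero' (Eventually.of_forall fun t => by positivity)
      ((eventually_ge_atTop 0).mono hdecay) ?_
    exact tendsto_const_nhds.div_atTop
      (tendsto_atTop_add_const_left _ _ (tendsto_id.const_mul_atTop (by positivity)))
  have hker : LinearMap.ker Ohalf = ⊥ :=
    eq_bot_mono (LinearMap.ker_le_ker_comp Ohalf Ohalf) (ker_eq_bot_of_inner_map_self_pos hOpd)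
  refine (Ohalf.isClosedEmbedding_of_injective hker).tendsto_nhds_iff.2 ?_
  rw [map_zero]
  exact tendsto_zero_of_norm_sq_tendsto_zero hHe

/-- Algebraic convergence of linear TEKI: if `e' = -C(t)Ω_ℬ e` and
`D(t) = Ω_ℬ^{1/2} C(t) Ω_ℬ^{1/2}` satisfies `⟨w, D(t)w⟩ ≥ ‖w‖²/(m₀⁻¹ + 2t)`, then the
`Z`-norm `‖e‖²_Z = ⟨Ω_ℬ e, e⟩` decays like `‖e(0)‖²_Z/(1 + 2m₀t)`, so `e(t) → 0`. -/
theorem teki_linear_algebraic_convergence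
    {B : Type*} [NormedAddCommGroup B] [InnerProductSpace ℝ B] [FiniteDimensional ℝ B]
    (OmegaB Ohalf : B →ₗ[ℝ] B)
    (hOsym : ∀ a b : B, ⟪OmegaB a, b⟫ = ⟪a, OmegaB b⟫)
    (hOpd : ∀ v : B, v ≠ 0 → 0 < ⟪v, OmegaB v⟫)
    (hhalfsym : ∀ a b : B, ⟪Ohalf a, b⟫ = ⟪a, Ohalf b⟫)
    (hhalf : Ohalf ∘ₗ Ohalf = OmegaB)
    (C : ℝ → B →ₗ[ℝ] B)
    (hCsym : ∀ t, ∀ a b : B, ⟪C t a, b⟫ = ⟪a, C t b⟫)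
    (hCpsd : ∀ t, ∀ v : B, 0 ≤ ⟪v, C t v⟫)
    (m0 : ℝ) (hm0 : 0 < m0)
    (hD : ∀ t ∈ Set.Ici (0 : ℝ), ∀ w : B,
      ‖w‖ ^ 2 / (m0⁻¹ + 2 * t) ≤ ⟪w, Ohalf (C t (Ohalf w))⟫)
    (e : ℝ → B)
    (hflow : ∀ t ∈ Set.Ici (0 : ℝ),
      HasDerivWithinAt e (-(C t (OmegaB (e t)))) (Set.Ici (0 : ℝ)) t) :
    (∀ t ∈ Set.Ici (0 : ℝ),
      ⟪OmegaB (e t), e t⟫ ≤ ⟪OmegaB (e 0), e 0⟫ / (1 + 2 * m0 * t))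
    ∧ Filter.Tendsto e Filter.atTop (nhds 0) :=
  teki_linear_algebraic_convergence_general OmegaB Ohalf hOpd hhalfsym hhalf C m0 hm0 hD e hflow
end
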